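/- arXiv:2605.04910 — 4 statements merged into one kernel-verified Lean document; each statement's English description precedes it below -/
import Mathlib

section
/- Let F be a field of characteristic 2 and K = F(z₁,…,zₙ). Then the F-linear span of {q₀² + z₁q₁² + ⋯ + zₙqₙ² : q₀,…,qₙ ∈ K} equals F(z²) + z₁F(z²) + ⋯ + zₙF(z²), where F(z²) = F(z₁²,…,zₙ²). -/
open MvPolynomial

section Aux

variable {F K : Type*} [Field F] [Field K] [Algebra F K] [CharP K 2]

/-- The F-span of the set of squares in a char-2 field extension. -/
private def spanSq (F : Type*) [Field F] (K : Type*) [Field K] [Algebra F K] : Submodule F K :=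
  Submodule.span F {x : K | ∃ q : K, x = q ^ 2}

private lemma sq_mem_spanSq (q : K) : q ^ 2 ∈ spanSq F K :=
  Submodule.subset_span ⟨q, rfl⟩

private lemma spanSq_mul_le : spanSq F K * spanSq F K ≤ spanSq F K := by
  rw [spanSq, Submodule.span_mul_span]
  apply Submodule.span_le.mpr
  rintro x ⟨a, ⟨p, rfl⟩, b, ⟨q, rfl⟩, rfl⟩
  exact Submodule.subset_span ⟨p * q, by ring⟩

private lemma spanSq_one_mem : (1 : K) ∈ spanSq F K :=
  Submodule.subset_span ⟨1, by ring⟩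

private lemma spanSq_mul_mem {x y : K} (hx : x ∈ spanSq F K) (hy : y ∈ spanSq F K) :
    x * y ∈ spanSq F K :=
  spanSq_mul_le (Submodule.mul_mem_mul hx hy)

private lemma spanSq_inv_mem {x : K} (hx : x ∈ spanSq F K) : x⁻¹ ∈ spanSq F K := by
  rcases eq_or_ne x 0 with rfl | h
  · simpa using (spanSq F K).zero_mem
  · have : x⁻¹ = x * (x⁻¹) ^ 2 := by rw [sq]; field_simp
    rw [this]
    exact spanSq_mul_mem hx (sq_mem_spanSq _)

/-- The span of squares as an intermediate field. -/
private def spanSqField (F : Type*) [Field F] (K : Type*) [Field K] [Algebra F K]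
    [CharP K 2] : IntermediateField F K :=
  Subalgebra.toIntermediateField
    ((spanSq F K).toSubalgebra spanSq_one_mem (fun _ _ => spanSq_mul_mem))
    (fun _ hx => spanSq_inv_mem hx)

private lemma mem_spanSqField {x : K} : x ∈ spanSqField F K ↔ x ∈ spanSq F K := Iff.rfl

/-- Adjoin of squares is contained in the span of squares. -/
private lemma adjoin_le_spanSq (s : Set K) (hs : ∀ x ∈ s, ∃ q : K, x = q ^ 2) :
    (IntermediateField.adjoin F s : Set K) ⊆ (spanSq F K : Set K) := by
  have h : IntermediateField.adjoin F s ≤ spanSqField F K := by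
    rw [IntermediateField.adjoin_le_iff]
    intro x hx
    rcases hs x hx with ⟨q, rfl⟩
    exact sq_mem_spanSq q
  exact h

end Aux

set_option maxHeartbeats 2000000 in
/-- In characteristic 2, the `F`-linear span of
`{q₀² + z₁q₁² + ⋯ + zₙqₙ² : qᵢ ∈ K}` in `K = F(z₁,…,zₙ)` equals
`F(z²) + z₁F(z²) + ⋯ + zₙF(z²)` where `F(z²) = F(z₁²,…,zₙ²)`. -/
theorem stmt_12 {F : Type*} [Field F] [CharP F 2] (n : ℕ) :
    (Submodule.span F {x : FractionRing (MvPolynomial (Fin n) F) |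
        ∃ (q₀ : FractionRing (MvPolynomial (Fin n) F))
          (q : Fin n → FractionRing (MvPolynomial (Fin n) F)),
          x = q₀ ^ 2 + ∑ i : Fin n,
            algebraMap (MvPolynomial (Fin n) F) (FractionRing (MvPolynomial (Fin n) F)) (X i) * q i ^ 2}
      : Set (FractionRing (MvPolynomial (Fin n) F))) =
    {x : FractionRing (MvPolynomial (Fin n) F) |
      ∃ (r₀ : FractionRing (MvPolynomial (Fin n) F))
        (r : Fin n → FractionRing (MvPolynomial (Fin n) F)),
        r₀ ∈ IntermediateField.adjoin F
          (Set.range fun i : Fin n =>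
            (algebraMap (MvPolynomial (Fin n) F) (FractionRing (MvPolynomial (Fin n) F)) (X i)) ^ 2) ∧
        (∀ i, r i ∈ IntermediateField.adjoin F
          (Set.range fun i : Fin n =>
            (algebraMap (MvPolynomial (Fin n) F) (FractionRing (MvPolynomial (Fin n) F)) (X i)) ^ 2)) ∧
        x = r₀ + ∑ i : Fin n,
          algebraMap (MvPolynomial (Fin n) F) (FractionRing (MvPolynomial (Fin n) F)) (X i) * r i} := by
  set R := MvPolynomial (Fin n) F
  set K := FractionRing R
  set Z : Fin n → K := fun i => algebraMap R K (X i) with hZ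
  haveI : CharP K 2 := charP_of_injective_algebraMap (algebraMap F K).injective 2
  haveI : Fact (Nat.Prime 2) := ⟨Nat.prime_two⟩
  set A := IntermediateField.adjoin F (Set.range fun i : Fin n => Z i ^ 2) with hA
  -- key lemma: every square in K lies in A
  have hpoly : ∀ p : R, algebraMap R K p ^ 2 ∈ A := by
    intro p
    induction p using MvPolynomial.induction_on with
    | C a =>
        rw [show (C a : R) = algebraMap F R a from rfl, ← IsScalarTower.algebraMap_apply]
        exact pow_mem (A.algebraMap_mem a) 2
    | add p q hp hq =>
        rw [RingHom.map_add, add_pow_char]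
        exact add_mem hp hq
    | mul_X p i hp =>
        rw [RingHom.map_mul, mul_pow]
        exact mul_mem hp (IntermediateField.subset_adjoin F _ ⟨i, rfl⟩)
  have hsq : ∀ q : K, q ^ 2 ∈ A := by
    intro q
    obtain ⟨a, b, hb, rfl⟩ := IsFractionRing.div_surjective (A := R) q
    rw [div_pow]
    exact div_mem (hpoly a) (hpoly b)
  -- A is contained in the span of squares
  have hAle : (A : Set K) ⊆ (spanSq F K : Set K) :=
    adjoin_le_spanSq _ (by rintro x ⟨i, rfl⟩; exact ⟨Z i, rfl⟩)
  ext x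
  simp only [Set.mem_setOf_eq, SetLike.mem_coe]
  constructor
  · intro hx
    induction hx using Submodule.span_induction with
    | mem y hy =>
        obtain ⟨q₀, q, rfl⟩ := hy
        exact ⟨q₀ ^ 2, fun i => q i ^ 2, hsq q₀, fun i => hsq (q i), rfl⟩
    | zero =>
        exact ⟨0, fun _ => 0, zero_mem A, fun _ => zero_mem A, by simp⟩
    | add y z _ _ hy hz =>
        obtain ⟨r₀, r, hr₀, hr, rfl⟩ := hy
        obtain ⟨s₀, s, hs₀, hs, rfl⟩ := hz
        refine ⟨r₀ + s₀, fun i => r i + s i, add_mem hr₀ hs₀,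
          fun i => add_mem (hr i) (hs i), ?_⟩
        simp only [mul_add, Finset.sum_add_distrib]
        ring
    | smul a y _ hy =>
        obtain ⟨r₀, r, hr₀, hr, rfl⟩ := hy
        refine ⟨a • r₀, fun i => a • r i, ?_, fun i => ?_, ?_⟩
        · exact A.smul_mem hr₀
        · exact A.smul_mem (hr i)
        · simp only [Algebra.smul_def, mul_add, Finset.mul_sum]
          congr 1
          exact Finset.sum_congr rfl fun i _ => by ring
  · rintro ⟨r₀, r, hr₀, hr, rfl⟩
    -- r₀ is in the span of the generators
    let G : Set K := {x | ∃ (q₀ : K) (q : Fin n → K), x = q₀ ^ 2 + ∑ i, Z i * q i ^ 2}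
    have hsq_gen : ∀ s : K, s ^ 2 ∈ Submodule.span F G := by
      intro s
      exact Submodule.subset_span ⟨s, fun _ => 0, by simp⟩
    have h1 : spanSq F K ≤ Submodule.span F G := by
      rw [spanSq]
      apply Submodule.span_le.mpr
      rintro y ⟨s, rfl⟩
      exact hsq_gen s
    have h2 : ∀ i : Fin n, spanSq F K ≤ (Submodule.span F G).comap (LinearMap.mulLeft F (Z i)) := by
      intro i
      rw [spanSq]
      apply Submodule.span_le.mpr
      rintro y ⟨s, rfl⟩
      simp only [SetLike.mem_coe, Submodule.mem_comap, LinearMap.mulLeft_apply]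
      refine Submodule.subset_span ⟨0, fun j => if j = i then s else 0, ?_⟩
      simp [apply_ite (· ^ 2), mul_ite, Finset.sum_ite_eq']
    exact add_mem (h1 (hAle hr₀)) (Submodule.sum_mem _ fun i _ => h2 i (hAle (hr i)))
end

section
/- Let F be a field of characteristic p > 0 and let r ∈ F(z₁,…,zₙ). If ∂r/∂zᵢ ∈ F(z₁ᵖ,…,zₙᵖ) for each i = 1,…,n, then r = r₀ + Σᵢ zᵢ·(∂r/∂zᵢ) for some r₀ ∈ F(z₁ᵖ,…,zₙᵖ). Consequently, r ∈ F(zᵖ) + z₁F(zᵖ) + ⋯ + zₙF(zᵖ) if and only if all ∂r/∂zᵢ lie in F(zᵖ). -/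
open MvPolynomial

/-- `D` is the formal `i`-th partial derivative on `F(z₁,…,zₙ)`. -/
def IsPartialDeriv {F : Type*} [Field F] {n : ℕ} (i : Fin n)
    (D : FractionRing (MvPolynomial (Fin n) F) → FractionRing (MvPolynomial (Fin n) F)) :
    Prop :=
  (∀ a b, D (a + b) = D a + D b) ∧
  (∀ a b, D (a * b) = D a * b + a * D b) ∧
  (∀ q : MvPolynomial (Fin n) F,
    D (algebraMap (MvPolynomial (Fin n) F) _ q)
      = algebraMap (MvPolynomial (Fin n) F) _ (pderiv i q))



lemma aux_coeff_pderiv {F : Type*} [CommSemiring F] {n : ℕ} (i : Fin n)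
    (c : MvPolynomial (Fin n) F) (m : Fin n →₀ ℕ) :
    coeff m (pderiv i c) = ((m i + 1 : ℕ) : F) * coeff (m + Finsupp.single i 1) c := by
  induction c using MvPolynomial.induction_on' with
  | add f g hf hg => simp [hf, hg, mul_add]
  | monomial s a =>
    rw [pderiv_monomial, coeff_monomial, coeff_monomial]
    by_cases h : s = m + Finsupp.single i 1
    · subst h
      have h1 : m + Finsupp.single i 1 - Finsupp.single i 1 = m := by
        ext j
        simp [Finsupp.tsub_apply, Finsupp.add_apply]
      rw [if_pos h1, if_pos rfl]
      simp only [Finsupp.add_apply, Finsupp.single_eq_same]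
      push_cast
      ring
    · rw [if_neg h]
      by_cases h' : s - Finsupp.single i 1 = m
      · rw [if_pos h']
        have hsi : s i = 0 := by
          by_contra hsi
          apply h
          ext j
          have hj' := congrArg (fun f : Fin n →₀ ℕ => f j) h'
          simp only [Finsupp.tsub_apply, Finsupp.add_apply, Finsupp.single_apply] at hj' ⊢
          rcases eq_or_ne i j with hj | hj
          · subst hj
            simp at hj' ⊢
            omega
          · simp only [if_neg hj] at hj' ⊢
            omega
        simp [hsi]
      · rw [if_neg h', mul_zero]

lemma aux_dvd {F : Type*} [Field F] (p : ℕ) [CharP F p] {n : ℕ}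
    {c : MvPolynomial (Fin n) F} (h : ∀ i, pderiv i c = 0) {m : Fin n →₀ ℕ}
    (hm : m ∈ c.support) (i : Fin n) : p ∣ m i := by
  by_cases h0 : m i = 0
  · simp [h0]
  · have h1 : (m - Finsupp.single i 1) + Finsupp.single i 1 = m := by
      ext j
      rcases eq_or_ne i j with hj | hj
      · subst hj
        simp only [Finsupp.add_apply, Finsupp.tsub_apply, Finsupp.single_eq_same]
        omega
      · simp [Finsupp.tsub_apply, Finsupp.single_apply, hj]
  
    have h2 := aux_coeff_pderiv i c (m - Finsupp.single i 1)
    rw [h i, coeff_zero, h1] at h2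
    have h3 : ((m - Finsupp.single i 1) : Fin n →₀ ℕ) i + 1 = m i := by
      have := congrArg (fun f : Fin n →₀ ℕ => f i) h1
      simpa using this
    rw [h3] at h2
    have h4 : coeff m c ≠ 0 := MvPolynomial.mem_support_iff.mp hm
    have h5 : ((m i : ℕ) : F) = 0 := (mul_eq_zero.mp h2.symm).resolve_right h4
    exact (CharP.cast_eq_zero_iff F p _).mp h5

lemma aux_pderiv_pow_zero {F : Type*} [Field F] (p : ℕ) [CharP F p] {n : ℕ}
    (i : Fin n) (q : MvPolynomial (Fin n) F) : pderiv i (q ^ p) = 0 := by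
  rw [Derivation.leibniz_pow]
  simp [CharP.cast_eq_zero (MvPolynomial (Fin n) F) p]

lemma aux_pow_mem {F : Type*} [Field F] (p : ℕ) (hp : 0 < p) [CharP F p] {n : ℕ}
    (E : IntermediateField F (FractionRing (MvPolynomial (Fin n) F)))
    (hE : ∀ i : Fin n,
      (algebraMap (MvPolynomial (Fin n) F) (FractionRing (MvPolynomial (Fin n) F)) (X i)) ^ p ∈ E)
    (q : MvPolynomial (Fin n) F) :
    algebraMap (MvPolynomial (Fin n) F) (FractionRing (MvPolynomial (Fin n) F)) (q ^ p) ∈ E := by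
  have hprime : p.Prime := (CharP.char_is_prime_or_zero F p).resolve_right (by omega)
  haveI : Fact p.Prime := ⟨hprime⟩
  induction q using MvPolynomial.induction_on with
  | C a =>
      rw [← map_pow, ← MvPolynomial.algebraMap_eq, ← IsScalarTower.algebraMap_apply]
      exact E.algebraMap_mem _
  | add f g hf hg =>
      rw [add_pow_char, RingHom.map_add]
      exact E.add_mem hf hg
  | mul_X f i hf =>
      rw [mul_pow, map_mul]
      exact E.mul_mem hf (by rw [map_pow]; exact hE i)

lemma aux_mem_of_pderiv_zero {F : Type*} [Field F] (p : ℕ) (hp : 0 < p) [CharP F p] {n : ℕ}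
    (E : IntermediateField F (FractionRing (MvPolynomial (Fin n) F)))
    (hE : ∀ i : Fin n,
      (algebraMap (MvPolynomial (Fin n) F) (FractionRing (MvPolynomial (Fin n) F)) (X i)) ^ p ∈ E)
    (c : MvPolynomial (Fin n) F) (hc : ∀ i, pderiv i c = 0) :
    algebraMap (MvPolynomial (Fin n) F) (FractionRing (MvPolynomial (Fin n) F)) c ∈ E := by
  have hrw : algebraMap (MvPolynomial (Fin n) F) (FractionRing (MvPolynomial (Fin n) F)) c
      = ∑ m ∈ c.support, algebraMap (MvPolynomial (Fin n) F) (FractionRing (MvPolynomial (Fin n) F))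
          (monomial m (coeff m c)) := by
    rw [← map_sum, ← MvPolynomial.as_sum]
  rw [hrw]
  refine sum_mem fun m hm => ?_
  rw [MvPolynomial.monomial_eq, map_mul]
  refine E.mul_mem ?_ ?_
  · rw [← MvPolynomial.algebraMap_eq, ← IsScalarTower.algebraMap_apply]
    exact E.algebraMap_mem _
  · rw [Finsupp.prod, map_prod]
    refine prod_mem fun j hj => ?_
    obtain ⟨k, hk⟩ := aux_dvd p hc hm j
    rw [map_pow, hk, pow_mul]
    exact pow_mem (hE j) k

noncomputable def constField {F : Type*} [Field F] {n : ℕ} (i : Fin n)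
    (D : FractionRing (MvPolynomial (Fin n) F) → FractionRing (MvPolynomial (Fin n) F))
    (hD : IsPartialDeriv i D) : IntermediateField F (FractionRing (MvPolynomial (Fin n) F)) where
  carrier := {x | D x = 0}
  zero_mem' := by have := hD.2.2 0; simpa using this
  one_mem' := by have := hD.2.2 1; simpa using this
  add_mem' := fun {a b} ha hb => by
    simp only [Set.mem_setOf_eq] at *
    rw [hD.1 a b, ha, hb, add_zero]
  mul_mem' := fun {a b} ha hb => by
    simp only [Set.mem_setOf_eq] at *
    rw [hD.2.1 a b, ha, hb, zero_mul, mul_zero, add_zero]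
  algebraMap_mem' := fun a => by
    show D (algebraMap F _ a) = 0
    rw [IsScalarTower.algebraMap_apply F (MvPolynomial (Fin n) F)
      (FractionRing (MvPolynomial (Fin n) F)), hD.2.2, MvPolynomial.algebraMap_eq,
      pderiv_C, map_zero]
  inv_mem' := fun x hx => by
    show D x⁻¹ = 0
    by_cases h0 : x = 0
    · subst h0
      rw [inv_zero]
      have := hD.2.2 0; simpa using this
    · have h1 : D 1 = 0 := by have := hD.2.2 1; simpa using this
      have h2 := hD.2.1 x x⁻¹
      rw [mul_inv_cancel₀ h0, h1, (show D x = 0 from hx), zero_mul, zero_add] at h2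
      exact (mul_eq_zero.mp h2.symm).resolve_left h0

lemma aux_D_eq_zero {F : Type*} [Field F] (p : ℕ) [CharP F p] {n : ℕ} (i : Fin n)
    {D : FractionRing (MvPolynomial (Fin n) F) → FractionRing (MvPolynomial (Fin n) F)}
    (hD : IsPartialDeriv i D)
    (E : IntermediateField F (FractionRing (MvPolynomial (Fin n) F)))
    (hE : E = IntermediateField.adjoin F
      (Set.range fun i : Fin n =>
        (algebraMap (MvPolynomial (Fin n) F) (FractionRing (MvPolynomial (Fin n) F)) (X i)) ^ p))
    {x : FractionRing (MvPolynomial (Fin n) F)} (hx : x ∈ E) : D x = 0 := by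
  have hle : E ≤ constField i D hD := by
    rw [hE, IntermediateField.adjoin_le_iff]
    rintro _ ⟨j, rfl⟩
    show D (algebraMap (MvPolynomial (Fin n) F) (FractionRing (MvPolynomial (Fin n) F)) (X j) ^ p)
      = 0
    rw [← map_pow, hD.2.2, aux_pderiv_pow_zero p i (X j), map_zero]
  exact hle hx

lemma aux_const_mem {F : Type*} [Field F] (p : ℕ) (hp : 0 < p) [CharP F p] {n : ℕ}
    (D : ∀ _ : Fin n, FractionRing (MvPolynomial (Fin n) F) → FractionRing (MvPolynomial (Fin n) F))
    (hD : ∀ i, IsPartialDeriv i (D i))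
    (E : IntermediateField F (FractionRing (MvPolynomial (Fin n) F)))
    (hE : E = IntermediateField.adjoin F
      (Set.range fun i : Fin n =>
        (algebraMap (MvPolynomial (Fin n) F) (FractionRing (MvPolynomial (Fin n) F)) (X i)) ^ p))
    {x : FractionRing (MvPolynomial (Fin n) F)} (hx : ∀ i, D i x = 0) : x ∈ E := by
  have hinj : Function.Injective
      (algebraMap (MvPolynomial (Fin n) F) (FractionRing (MvPolynomial (Fin n) F))) :=
    IsFractionRing.injective _ _
  obtain ⟨a, b, hb, hab⟩ := IsFractionRing.div_surjective (A := MvPolynomial (Fin n) F) x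
  have hb0 : algebraMap (MvPolynomial (Fin n) F) (FractionRing (MvPolynomial (Fin n) F)) b ≠ 0 := by
    have hbne : b ≠ 0 := nonZeroDivisors.ne_zero hb
    simpa [map_eq_zero_iff _ hinj] using hbne
  have hEX : ∀ i : Fin n,
      algebraMap (MvPolynomial (Fin n) F) (FractionRing (MvPolynomial (Fin n) F)) (X i) ^ p ∈ E := by
    intro i
    rw [hE]
    exact IntermediateField.subset_adjoin _ _ ⟨i, rfl⟩
  have hpow : algebraMap (MvPolynomial (Fin n) F) (FractionRing (MvPolynomial (Fin n) F)) b ^ p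
      = algebraMap (MvPolynomial (Fin n) F) (FractionRing (MvPolynomial (Fin n) F)) b ^ (p - 1)
        * algebraMap (MvPolynomial (Fin n) F) (FractionRing (MvPolynomial (Fin n) F)) b := by
    rw [← pow_succ]
    congr 1
    omega
  have key : algebraMap (MvPolynomial (Fin n) F) (FractionRing (MvPolynomial (Fin n) F))
        (a * b ^ (p - 1))
      = x * algebraMap (MvPolynomial (Fin n) F) (FractionRing (MvPolynomial (Fin n) F)) (b ^ p) := by
    rw [map_mul, map_pow, map_pow, ← hab, hpow]
    field_simp
  have hDc : ∀ i, pderiv i (a * b ^ (p - 1)) = 0 := by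
    intro i
    have h1 := (hD i).2.2 (a * b ^ (p - 1))
    have h2 : D i (x * algebraMap (MvPolynomial (Fin n) F)
        (FractionRing (MvPolynomial (Fin n) F)) (b ^ p)) = 0 := by
      rw [(hD i).2.1, hx i, zero_mul, zero_add]
      have h3 : D i (algebraMap (MvPolynomial (Fin n) F)
          (FractionRing (MvPolynomial (Fin n) F)) (b ^ p)) = 0 := by
        rw [(hD i).2.2, aux_pderiv_pow_zero p i b, map_zero]
      rw [h3, mul_zero]
    rw [key, h2] at h1
    exact hinj (by rw [← h1, map_zero])
  have hcm := aux_mem_of_pderiv_zero p hp E hEX _ hDc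
  have hbp := aux_pow_mem p hp E hEX b
  have hbp0 : algebraMap (MvPolynomial (Fin n) F) (FractionRing (MvPolynomial (Fin n) F))
      (b ^ p) ≠ 0 := by
    rw [map_pow]
    exact pow_ne_zero _ hb0
  have hxeq : x = algebraMap (MvPolynomial (Fin n) F) (FractionRing (MvPolynomial (Fin n) F))
        (a * b ^ (p - 1))
      * (algebraMap (MvPolynomial (Fin n) F) (FractionRing (MvPolynomial (Fin n) F)) (b ^ p))⁻¹ := by
    rw [key]
    field_simp
  rw [hxeq]
  exact E.mul_mem hcm (E.inv_mem hbp)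

/-- If all `∂r/∂zᵢ ∈ F(zᵖ)` then `r = r₀ + Σᵢ zᵢ·(∂r/∂zᵢ)` with `r₀ ∈ F(zᵖ)`; consequently
`r ∈ F(zᵖ) + z₁F(zᵖ) + ⋯ + zₙF(zᵖ)` iff all `∂r/∂zᵢ` lie in `F(zᵖ)`. -/
theorem stmt_13 {F : Type*} [Field F] (p : ℕ) (hp : 0 < p) [CharP F p] (n : ℕ)
    (D : ∀ _ : Fin n, FractionRing (MvPolynomial (Fin n) F) → FractionRing (MvPolynomial (Fin n) F))
    (hD : ∀ i, IsPartialDeriv i (D i))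
    (E : IntermediateField F (FractionRing (MvPolynomial (Fin n) F)))
    (hE : E = IntermediateField.adjoin F
      (Set.range fun i : Fin n =>
        (algebraMap (MvPolynomial (Fin n) F) (FractionRing (MvPolynomial (Fin n) F)) (X i)) ^ p))
    (r : FractionRing (MvPolynomial (Fin n) F)) :
    ((∀ i, D i r ∈ E) →
      ∃ r₀ ∈ E, r = r₀ + ∑ i : Fin n,
        algebraMap (MvPolynomial (Fin n) F) (FractionRing (MvPolynomial (Fin n) F)) (X i) * D i r) ∧
    ((∃ r₀ ∈ E, ∃ s : Fin n → FractionRing (MvPolynomial (Fin n) F),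
        (∀ i, s i ∈ E) ∧ r = r₀ + ∑ i : Fin n,
          algebraMap (MvPolynomial (Fin n) F) (FractionRing (MvPolynomial (Fin n) F)) (X i) * s i) ↔
      ∀ i, D i r ∈ E) := by
  classical
  have hz : ∀ (i : Fin n) (x), x ∈ E → D i x = 0 := fun i x hx =>
    aux_D_eq_zero p i (hD i) E hE hx
  have hD0 : ∀ i, D i 0 = 0 := fun i => by have := (hD i).2.2 0; simpa using this
  have hDneg : ∀ (i : Fin n) (x), D i (-x) = - D i x := by
    intro i x
    have h1 := (hD i).1 x (-x)
    rw [add_neg_cancel, hD0 i] at h1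
    exact eq_neg_of_add_eq_zero_right h1.symm
  have hDsub : ∀ (i : Fin n) (x y), D i (x - y) = D i x - D i y := by
    intro i x y
    rw [sub_eq_add_neg, (hD i).1, hDneg, sub_eq_add_neg]
  have hDsum : ∀ (i : Fin n) (f : Fin n → FractionRing (MvPolynomial (Fin n) F)),
      D i (∑ j, f j) = ∑ j, D i (f j) := fun i f =>
    map_sum (AddMonoidHom.mk' (D i) ((hD i).1)) f Finset.univ
  have hDX : ∀ i j : Fin n,
      D i (algebraMap (MvPolynomial (Fin n) F) (FractionRing (MvPolynomial (Fin n) F)) (X j))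
        = if j = i then 1 else 0 := by
    intro i j
    rw [(hD i).2.2]
    rcases eq_or_ne j i with hj | hj
    · subst hj; rw [pderiv_X_self, map_one, if_pos rfl]
    · rw [pderiv_X_of_ne hj, map_zero, if_neg hj]
  have hkey : ∀ (i : Fin n) (s : Fin n → FractionRing (MvPolynomial (Fin n) F)),
      (∀ j, D i (s j) = 0) →
      D i (∑ j, algebraMap (MvPolynomial (Fin n) F) (FractionRing (MvPolynomial (Fin n) F)) (X j)
        * s j) = s i := by
    intro i s hs
    rw [hDsum]
    have h1 : ∀ j : Fin n, D i (algebraMap (MvPolynomial (Fin n) F)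
        (FractionRing (MvPolynomial (Fin n) F)) (X j) * s j)
        = (if j = i then 1 else 0) * s j := by
      intro j
      rw [(hD i).2.1, hs j, mul_zero, add_zero, hDX]
    rw [Finset.sum_congr rfl fun j _ => h1 j]
    simp [ite_mul]
  have part1 : (∀ i, D i r ∈ E) →
      ∃ r₀ ∈ E, r = r₀ + ∑ i : Fin n,
        algebraMap (MvPolynomial (Fin n) F) (FractionRing (MvPolynomial (Fin n) F)) (X i)
          * D i r := by
    intro h
    refine ⟨r - ∑ j, algebraMap (MvPolynomial (Fin n) F) (FractionRing (MvPolynomial (Fin n) F))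
      (X j) * D j r, ?_, by ring⟩
    apply aux_const_mem p hp D hD E hE
    intro i
    rw [hDsub, hkey i (fun j => D j r) (fun j => hz i _ (h j)), sub_self]
  refine ⟨part1, ?_, fun h => ?_⟩
  · rintro ⟨r₀, hr₀, s, hs, rfl⟩ i
    rw [(hD i).1, hz i r₀ hr₀, zero_add, hkey i s (fun j => hz i _ (hs j))]
    exact hs i
  · obtain ⟨r₀, hr₀, heq⟩ := part1 h
    exact ⟨r₀, hr₀, fun i => D i r, fun i => h i, heq⟩
end

section
/- Let F be a field of characteristic p > 0. The set F(zᵖ) + z₁F(zᵖ) + ⋯ + zₙF(zᵖ) is a vector space over the field F(zᵖ) = F(z₁ᵖ,…,zₙᵖ) with basis 1, z₁, …, zₙ; in particular its dimension over F(zᵖ) is n + 1. -/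
set_option synthInstance.maxHeartbeats 800000

open MvPolynomial

set_option maxHeartbeats 1600000

section Aux
variable {F : Type*} [Field F] {n : ℕ}

noncomputable def myD (F : Type*) [Field F] (n : ℕ) (i : Fin n)
    (x : FractionRing (MvPolynomial (Fin n) F)) : FractionRing (MvPolynomial (Fin n) F) :=
  let s := IsLocalization.sec (nonZeroDivisors (MvPolynomial (Fin n) F)) x
  (algebraMap (MvPolynomial (Fin n) F) (FractionRing (MvPolynomial (Fin n) F)) (pderiv i s.1)
      * algebraMap _ _ (s.2 : MvPolynomial (Fin n) F)
    - algebraMap (MvPolynomial (Fin n) F) _ s.1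
      * algebraMap _ _ (pderiv i (s.2 : MvPolynomial (Fin n) F)))
    / (algebraMap (MvPolynomial (Fin n) F) (FractionRing (MvPolynomial (Fin n) F))
        (s.2 : MvPolynomial (Fin n) F)) ^ 2

theorem myD_div (i : Fin n) (f g : MvPolynomial (Fin n) F) (hg : g ≠ 0) :
    myD F n i (algebraMap _ (FractionRing (MvPolynomial (Fin n) F)) f / algebraMap _ _ g) =
      (algebraMap (MvPolynomial (Fin n) F) _ (pderiv i f) * algebraMap _ _ g
        - algebraMap _ _ f * algebraMap _ _ (pderiv i g))
        / algebraMap _ _ g ^ 2 := by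
  set K := FractionRing (MvPolynomial (Fin n) F)
  set φ := algebraMap (MvPolynomial (Fin n) F) K with hφ
  have hinj : Function.Injective φ := IsFractionRing.injective _ _
  set x : K := φ f / φ g with hx
  have hs := IsLocalization.sec_spec (nonZeroDivisors (MvPolynomial (Fin n) F)) x
  set s := IsLocalization.sec (nonZeroDivisors (MvPolynomial (Fin n) F)) x with hsdef
  have hg0 : φ g ≠ 0 := (map_ne_zero_iff φ hinj).2 hg
  have hs2 : (s.2 : MvPolynomial (Fin n) F) ≠ 0 := nonZeroDivisors.ne_zero s.2.2
  have hs20 : φ (s.2 : MvPolynomial (Fin n) F) ≠ 0 := (map_ne_zero_iff φ hinj).2 hs2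
  have hpoly : f * (s.2 : MvPolynomial (Fin n) F) = s.1 * g := by
    apply hinj
    rw [map_mul, map_mul]
    rw [hx] at hs
    rw [div_mul_eq_mul_div, div_eq_iff hg0] at hs
    exact hs
  have hd := congrArg (pderiv i) hpoly
  rw [pderiv_mul, pderiv_mul] at hd
  show (φ (pderiv i s.1) * φ (s.2 : MvPolynomial (Fin n) F)
      - φ s.1 * φ (pderiv i (s.2 : MvPolynomial (Fin n) F))) / φ (s.2 : MvPolynomial (Fin n) F) ^ 2
    = (φ (pderiv i f) * φ g - φ f * φ (pderiv i g)) / φ g ^ 2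
  rw [div_eq_div_iff (pow_ne_zero _ hs20) (pow_ne_zero _ hg0)]
  rw [← map_pow, ← map_pow, ← map_mul, ← map_mul, ← map_mul, ← map_mul, ← map_sub, ← map_sub,
    ← map_mul, ← map_mul]
  apply congrArg φ
  linear_combination (-(g * (s.2 : MvPolynomial (Fin n) F))) * hd
    + (pderiv i g * (s.2 : MvPolynomial (Fin n) F)
        + pderiv i (s.2 : MvPolynomial (Fin n) F) * g) * hpoly

section More
variable (i : Fin n)

theorem myD_algebraMap (f : MvPolynomial (Fin n) F) :
    myD F n i (algebraMap _ (FractionRing (MvPolynomial (Fin n) F)) f)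
      = algebraMap _ _ (pderiv i f) := by
  have := myD_div i f 1 one_ne_zero
  simpa using this

theorem myD_add (x y : FractionRing (MvPolynomial (Fin n) F)) :
    myD F n i (x + y) = myD F n i x + myD F n i y := by
  obtain ⟨f₁, g₁, hg₁, rfl⟩ := IsFractionRing.div_surjective (A := MvPolynomial (Fin n) F) x
  obtain ⟨f₂, g₂, hg₂, rfl⟩ := IsFractionRing.div_surjective (A := MvPolynomial (Fin n) F) y
  rw [mem_nonZeroDivisors_iff_ne_zero] at hg₁ hg₂
  set K := FractionRing (MvPolynomial (Fin n) F)
  set φ := algebraMap (MvPolynomial (Fin n) F) K with hφ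
  have hinj : Function.Injective φ := IsFractionRing.injective _ _
  have h10 : φ g₁ ≠ 0 := (map_ne_zero_iff φ hinj).2 hg₁
  have h20 : φ g₂ ≠ 0 := (map_ne_zero_iff φ hinj).2 hg₂
  have key : φ f₁ / φ g₁ + φ f₂ / φ g₂ = φ (f₁ * g₂ + f₂ * g₁) / φ (g₁ * g₂) := by
    rw [map_add, map_mul, map_mul, map_mul]
    rw [div_add_div _ _ h10 h20]
    ring
  rw [key, myD_div _ _ _ (mul_ne_zero hg₁ hg₂), myD_div _ _ _ hg₁, myD_div _ _ _ hg₂]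
  rw [map_add, pderiv_mul, pderiv_mul, pderiv_mul]
  push_cast [map_add, map_mul]
  simp only [φ, K] at h10 h20 ⊢
  field_simp
  ring

theorem myD_mul (x y : FractionRing (MvPolynomial (Fin n) F)) :
    myD F n i (x * y) = x * myD F n i y + y * myD F n i x := by
  obtain ⟨f₁, g₁, hg₁, rfl⟩ := IsFractionRing.div_surjective (A := MvPolynomial (Fin n) F) x
  obtain ⟨f₂, g₂, hg₂, rfl⟩ := IsFractionRing.div_surjective (A := MvPolynomial (Fin n) F) y
  rw [mem_nonZeroDivisors_iff_ne_zero] at hg₁ hg₂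
  set K := FractionRing (MvPolynomial (Fin n) F)
  set φ := algebraMap (MvPolynomial (Fin n) F) K with hφ
  have hinj : Function.Injective φ := IsFractionRing.injective _ _
  have h10 : φ g₁ ≠ 0 := (map_ne_zero_iff φ hinj).2 hg₁
  have h20 : φ g₂ ≠ 0 := (map_ne_zero_iff φ hinj).2 hg₂
  have key : φ f₁ / φ g₁ * (φ f₂ / φ g₂) = φ (f₁ * f₂) / φ (g₁ * g₂) := by
    rw [map_mul, map_mul]
    rw [div_mul_div_comm]
  rw [key, myD_div _ _ _ (mul_ne_zero hg₁ hg₂), myD_div _ _ _ hg₁, myD_div _ _ _ hg₂]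
  rw [pderiv_mul, pderiv_mul]
  push_cast [map_add, map_mul]
  simp only [φ, K] at h10 h20 ⊢
  field_simp
  ring

theorem myD_zero : myD F n i 0 = 0 := by
  have := myD_algebraMap i (0 : MvPolynomial (Fin n) F)
  simpa using this

theorem myD_one : myD F n i 1 = 0 := by
  have := myD_algebraMap i (1 : MvPolynomial (Fin n) F)
  simpa using this

theorem myD_inv (x : FractionRing (MvPolynomial (Fin n) F)) (hx : myD F n i x = 0) :
    myD F n i x⁻¹ = 0 := by
  rcases eq_or_ne x 0 with rfl | h0
  · simpa using myD_zero i
  · have h1 : x * x⁻¹ = 1 := mul_inv_cancel₀ h0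
    have := myD_mul i x x⁻¹
    rw [h1, myD_one, hx, mul_zero, add_zero] at this
    exact (mul_eq_zero.1 this.symm).resolve_left h0

noncomputable def myDhom (i : Fin n) :
    FractionRing (MvPolynomial (Fin n) F) →+ FractionRing (MvPolynomial (Fin n) F) :=
  AddMonoidHom.mk' (myD F n i) (myD_add i)

theorem myD_vanish (p : ℕ) [CharP F p] (i : Fin n)
    {x : FractionRing (MvPolynomial (Fin n) F)}
    (hx : x ∈ IntermediateField.adjoin F
      (Set.range fun j : Fin n =>
        (algebraMap (MvPolynomial (Fin n) F) (FractionRing (MvPolynomial (Fin n) F)) (X j)) ^ p)) :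
    myD F n i x = 0 := by
  induction hx using IntermediateField.adjoin_induction with
  | mem x hx =>
    obtain ⟨j, rfl⟩ := hx
    beta_reduce
    rw [← map_pow, myD_algebraMap, (pderiv i).leibniz_pow]
    simp [nsmul_eq_mul, CharP.cast_eq_zero]
  | algebraMap c =>
    rw [IsScalarTower.algebraMap_apply F (MvPolynomial (Fin n) F)
      (FractionRing (MvPolynomial (Fin n) F)), MvPolynomial.algebraMap_eq, myD_algebraMap]
    simp
  | add x y hx hy ihx ihy => rw [myD_add, ihx, ihy, add_zero]
  | inv x hx ih => exact myD_inv i x ih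
  | mul x y hx hy ihx ihy => rw [myD_mul, ihx, ihy, mul_zero, mul_zero, add_zero]
end More
end Aux

/-- `F(zᵖ) + z₁F(zᵖ) + ⋯ + zₙF(zᵖ)` is an `F(zᵖ)`-vector space with basis `1, z₁, …, zₙ`;
in particular it has dimension `n + 1` over `F(zᵖ)`. -/
theorem stmt_14 {F : Type*} [Field F] (p : ℕ) (hp : 0 < p) [CharP F p] (n : ℕ)
    (E : IntermediateField F (FractionRing (MvPolynomial (Fin n) F)))
    (hE : E = IntermediateField.adjoin F
      (Set.range fun i : Fin n =>
        (algebraMap (MvPolynomial (Fin n) F) (FractionRing (MvPolynomial (Fin n) F)) (X i)) ^ p))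
    (v : Fin (n + 1) → FractionRing (MvPolynomial (Fin n) F))
    (hv : v = Fin.cons 1 fun i : Fin n =>
      algebraMap (MvPolynomial (Fin n) F) (FractionRing (MvPolynomial (Fin n) F)) (X i)) :
    LinearIndependent E v ∧
    ((Submodule.span E (Set.range v) : Submodule E (FractionRing (MvPolynomial (Fin n) F))) :
        Set (FractionRing (MvPolynomial (Fin n) F))) =
      {x : FractionRing (MvPolynomial (Fin n) F) |
        ∃ (r₀ : FractionRing (MvPolynomial (Fin n) F))
          (r : Fin n → FractionRing (MvPolynomial (Fin n) F)),
          r₀ ∈ E ∧ (∀ i, r i ∈ E) ∧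
          x = r₀ + ∑ i : Fin n,
            algebraMap (MvPolynomial (Fin n) F) (FractionRing (MvPolynomial (Fin n) F)) (X i) * r i} ∧
    Module.finrank E (Submodule.span E (Set.range v)) = n + 1 := by
  subst hv hE
  set E := IntermediateField.adjoin F
      (Set.range fun i : Fin n =>
        (algebraMap (MvPolynomial (Fin n) F) (FractionRing (MvPolynomial (Fin n) F)) (X i)) ^ p)
    with hE
  set v : Fin (n + 1) → FractionRing (MvPolynomial (Fin n) F) := Fin.cons 1 fun i : Fin n =>
      algebraMap (MvPolynomial (Fin n) F) (FractionRing (MvPolynomial (Fin n) F)) (X i) with hv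
  have hsmul : ∀ (c : E) (x : FractionRing (MvPolynomial (Fin n) F)), c • x = (c : _) * x :=
    fun c x => rfl
  have hv0 : v 0 = 1 := rfl
  have hvs : ∀ i : Fin n, v i.succ
      = algebraMap (MvPolynomial (Fin n) F) (FractionRing (MvPolynomial (Fin n) F)) (X i) :=
    fun i => rfl
  have hli : LinearIndependent E v := by
    rw [Fintype.linearIndependent_iff]
    intro c hc
    have hcE : ∀ j, (c j : FractionRing (MvPolynomial (Fin n) F)) ∈ E := fun j => (c j).2
    have hsucc : ∀ i : Fin n, (c i.succ : FractionRing (MvPolynomial (Fin n) F)) = 0 := by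
      intro i
      have h1 : myD F n i (∑ j : Fin (n + 1), c j • v j) = 0 := by
        rw [hc]; exact myD_zero i
      have h2 : myD F n i (∑ j : Fin (n + 1), c j • v j)
          = ∑ j : Fin (n + 1), (c j : FractionRing (MvPolynomial (Fin n) F)) * myD F n i (v j) := by
        rw [show myD F n i (∑ j : Fin (n + 1), c j • v j)
            = myDhom i (∑ j : Fin (n + 1), c j • v j) from rfl, map_sum]
        refine Finset.sum_congr rfl fun j _ => ?_
        rw [show (myDhom i (c j • v j) : FractionRing (MvPolynomial (Fin n) F))
            = myD F n i (c j • v j) from rfl, hsmul,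
          myD_mul, myD_vanish p i (hcE j), mul_zero, add_zero]
      rw [h2, Fin.sum_univ_succ, hv0] at h1
      rw [Fintype.sum_congr _ _
        (fun j => by rw [hvs, myD_algebraMap, pderiv_X, Pi.single_apply,
          apply_ite (algebraMap (MvPolynomial (Fin n) F) (FractionRing (MvPolynomial (Fin n) F))),
          map_one, map_zero])] at h1
      rw [myD_one, mul_zero, zero_add] at h1
      simpa using h1
    intro j
    refine Fin.cases ?_ (fun i => Subtype.ext (hsucc i)) j
    have h3 := hc
    rw [Fin.sum_univ_succ] at h3
    simp only [hsmul] at h3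
    rw [Fintype.sum_congr _ _ (fun i => by rw [hsucc i, zero_mul])] at h3
    rw [Finset.sum_const_zero, add_zero, hv0, mul_one] at h3
    exact Subtype.ext h3
  refine ⟨hli, ?_, ?_⟩
  · ext x
    simp only [SetLike.mem_coe, Submodule.mem_span_range_iff_exists_fun, Set.mem_setOf_eq]
    constructor
    · rintro ⟨c, rfl⟩
      refine ⟨c 0, fun i => (c i.succ : FractionRing (MvPolynomial (Fin n) F)),
        (c 0).2, fun i => (c i.succ).2, ?_⟩
      rw [Fin.sum_univ_succ]
      simp only [hsmul, hv0, mul_one]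
      congr 1
      refine Finset.sum_congr rfl fun i _ => ?_
      rw [hvs]; exact mul_comm _ _
    · rintro ⟨r₀, r, h₀, hr, rfl⟩
      refine ⟨Fin.cons ⟨r₀, h₀⟩ fun i => ⟨r i, hr i⟩, ?_⟩
      rw [Fin.sum_univ_succ]
      simp only [hsmul, hv0, mul_one, Fin.cons_zero, Fin.cons_succ]
      congr 1
      refine Finset.sum_congr rfl fun i _ => ?_
      rw [hvs]; exact mul_comm _ _
  · rw [finrank_span_eq_card hli, Fintype.card_fin]
end

section
/- Let F ⊆ K be fields with char F = p > 0, and let z₁,…,zₙ,…,z_N be indeterminates with N ≥ n. If r ∈ F(z₁,…,zₙ) and r ∈ K(z₁ᵖ,…,z_Nᵖ) (as a subfield of K(z₁,…,z_N)), then r ∈ F(z₁ᵖ,…,zₙᵖ). -/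
open MvPolynomial

lemma pderiv_eq_zero_dvd {K : Type*} [Field K] {p : ℕ} [CharP K p]
    {σ : Type*} [DecidableEq σ] (i : σ) (h : MvPolynomial σ K)
    (hd : pderiv i h = 0) : ∀ d ∈ h.support, p ∣ d i := by
  intro d hdsup
  by_cases hdi : d i = 0
  · simp [hdi]
  have expand : pderiv i h
      = ∑ s ∈ h.support, monomial (s - Finsupp.single i 1) (coeff s h * s i) := by
    conv_lhs => rw [h.as_sum]
    rw [map_sum]
    simp [pderiv_monomial]
  have key : coeff (d - Finsupp.single i 1) (pderiv i h) = coeff d h * d i := by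
    rw [expand, coeff_sum]
    rw [Finset.sum_eq_single d]
    · simp [coeff_monomial]
    · intro s hs hsd
      rw [coeff_monomial]
      by_cases hsi : s i = 0
      · simp [hsi]
      · have : s - Finsupp.single i 1 ≠ d - Finsupp.single i 1 := by
          intro hcon
          apply hsd
          ext j
          have := DFunLike.congr_fun hcon j
          simp only [Finsupp.tsub_apply, Finsupp.single_apply] at this
          by_cases hji : j = i
          · subst hji
            simp at this
            omega
          · simpa [Ne.symm hji] using this
        simp [this]
    · intro hds; exact absurd hdsup hds
  rw [hd] at key
  simp only [coeff_zero] at key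
  have hc : coeff d h ≠ 0 := mem_support_iff.mp hdsup
  have : ((d i : ℕ) : K) = 0 := by
    rcases mul_eq_zero.mp key.symm with h1 | h1
    · exact absurd h1 hc
    · exact h1
  exact (CharP.cast_eq_zero_iff K p (d i)).mp this

/-- Let `F ⊆ K` be fields with `char F = p > 0`, and work inside
`L = K(z₁,…,z_N) = FractionRing (MvPolynomial (Fin N) K)` with `N ≥ n`.
If `r` lies in the subfield `F(z₁,…,zₙ)` of `L` and also in `K(z₁ᵖ,…,z_Nᵖ)`,
then `r` lies in `F(z₁ᵖ,…,zₙᵖ)`. -/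
theorem stmt_18 {F K : Type*} [Field F] [Field K] [Algebra F K]
    (p : ℕ) (hp : 0 < p) [CharP F p] (n N : ℕ) (hnN : n ≤ N)
    (z : Fin N → FractionRing (MvPolynomial (Fin N) K))
    (hz : z = fun i => algebraMap (MvPolynomial (Fin N) K) _ (X i))
    (ιF : F →+* FractionRing (MvPolynomial (Fin N) K))
    (hιF : ιF = (algebraMap (MvPolynomial (Fin N) K) _).comp
      ((algebraMap K (MvPolynomial (Fin N) K)).comp (algebraMap F K)))
    (ιK : K →+* FractionRing (MvPolynomial (Fin N) K))
    (hιK : ιK = (algebraMap (MvPolynomial (Fin N) K) _).comp (algebraMap K (MvPolynomial (Fin N) K)))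
    (r : FractionRing (MvPolynomial (Fin N) K))
    (hr1 : r ∈ Subfield.closure
      (Set.range ιF ∪ {x | ∃ i : Fin N, (i : ℕ) < n ∧ x = z i}))
    (hr2 : r ∈ Subfield.closure
      (Set.range ιK ∪ {x | ∃ i : Fin N, x = z i ^ p})) :
    r ∈ Subfield.closure
      (Set.range ιF ∪ {x | ∃ i : Fin N, (i : ℕ) < n ∧ x = z i ^ p}) := by
  classical
  by_cases hr0 : r = 0
  · rw [hr0]; exact zero_mem _
  have hKp : CharP K p := charP_of_injective_algebraMap (algebraMap F K).injective p
  have hinj : Function.Injective (algebraMap (MvPolynomial (Fin N) K)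
      (FractionRing (MvPolynomial (Fin N) K))) :=
    IsFractionRing.injective (MvPolynomial (Fin N) K) (FractionRing (MvPolynomial (Fin N) K))
  set θ : MvPolynomial (Fin n) F →+* MvPolynomial (Fin N) K :=
    (MvPolynomial.map (algebraMap F K)).comp
      (MvPolynomial.rename (Fin.castLE hnN)).toRingHom with hθ
  set ε : MvPolynomial (Fin N) K →+* MvPolynomial (Fin N) K :=
    (MvPolynomial.aeval (fun i : Fin N => (X i : MvPolynomial (Fin N) K) ^ p)).toRingHom with hε
  -- key membership lemma
  have memA : ∀ w : MvPolynomial (Fin N) K, (∀ d ∈ w.support, ∀ i : Fin N, p ∣ d i) →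
      (∀ i : Fin N, i ∈ w.vars → (i : ℕ) < n) →
      (∀ d, coeff d w ∈ (algebraMap F K).range) →
      algebraMap (MvPolynomial (Fin N) K) (FractionRing (MvPolynomial (Fin N) K)) w ∈ Subfield.closure (Set.range ιF ∪ {x | ∃ i : Fin N, (i : ℕ) < n ∧ x = z i ^ p}) := by
    intro w hdvd hvars hcoef
    rw [w.as_sum, map_sum]
    refine sum_mem fun d hd => ?_
    rw [monomial_eq, map_mul]
    refine mul_mem ?_ ?_
    · obtain ⟨c, hc⟩ := hcoef d
      have hx : algebraMap (MvPolynomial (Fin N) K) (FractionRing (MvPolynomial (Fin N) K)) (C (coeff d w)) = ιF c := by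
        rw [hιF, ← hc]; rfl
      rw [hx]
      exact Subfield.subset_closure (Or.inl ⟨c, rfl⟩)
    · rw [Finsupp.prod, map_prod]
      refine prod_mem fun i hi => ?_
      have hdi : d i ≠ 0 := Finsupp.mem_support_iff.mp hi
      have hlt : (i : ℕ) < n := hvars i ((mem_vars i).mpr ⟨d, hd, hi⟩)
      have hpow : algebraMap (MvPolynomial (Fin N) K) (FractionRing (MvPolynomial (Fin N) K)) ((X i : MvPolynomial (Fin N) K) ^ d i) = (z i ^ p) ^ (d i / p) := by
        simp only [hz]
        rw [map_pow, ← pow_mul, Nat.mul_div_cancel' (hdvd d hd i)]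
      rw [hpow]
      refine pow_mem (Subfield.subset_closure ?_) _
      exact Or.inr ⟨i, hlt, rfl⟩
  -- decode hr1
  have hS1 : Subfield.closure (Set.range ιF ∪ {x | ∃ i : Fin N, (i : ℕ) < n ∧ x = z i})
      ≤ Subfield.closure (Set.range ((algebraMap (MvPolynomial (Fin N) K) (FractionRing (MvPolynomial (Fin N) K))).comp θ)) := by
    apply Subfield.closure_mono
    rintro x (⟨c, rfl⟩ | ⟨i, hi, rfl⟩)
    · refine ⟨C c, ?_⟩
      rw [hιF]
      simp only [RingHom.comp_apply, hθ, AlgHom.toRingHom_eq_coe, RingHom.coe_coe,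
        rename_C, map_C, MvPolynomial.algebraMap_eq]
    · refine ⟨X ⟨(i : ℕ), hi⟩, ?_⟩
      have hcast : Fin.castLE hnN ⟨(i : ℕ), hi⟩ = i := by ext; rfl
      simp only [RingHom.comp_apply, hθ, AlgHom.toRingHom_eq_coe, RingHom.coe_coe,
        rename_X, hcast, map_X, hz]
  obtain ⟨a, ha, b, hb, hab⟩ := Subfield.mem_closure_iff.mp (hS1 hr1)
  obtain ⟨f, hf⟩ := Subring.closure_le.mpr
    (fun x hx => RingHom.mem_range.mpr (Set.mem_range.mp hx)) ha
  obtain ⟨g, hg⟩ := Subring.closure_le.mpr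
    (fun x hx => RingHom.mem_range.mpr (Set.mem_range.mp hx)) hb
  -- decode hr2
  have hS2 : Subfield.closure (Set.range ιK ∪ {x | ∃ i : Fin N, x = z i ^ p})
      ≤ Subfield.closure (Set.range ((algebraMap (MvPolynomial (Fin N) K) (FractionRing (MvPolynomial (Fin N) K))).comp ε)) := by
    apply Subfield.closure_mono
    rintro x (⟨c, rfl⟩ | ⟨i, rfl⟩)
    · refine ⟨C c, ?_⟩
      rw [hιK]
      simp only [RingHom.comp_apply, hε, AlgHom.toRingHom_eq_coe, RingHom.coe_coe, aeval_C,
        MvPolynomial.algebraMap_eq]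
    · refine ⟨X i, ?_⟩
      simp only [RingHom.comp_apply, hε, AlgHom.toRingHom_eq_coe, RingHom.coe_coe, aeval_X,
        map_pow, hz]
  obtain ⟨a2, ha2, b2, hb2, hab2⟩ := Subfield.mem_closure_iff.mp (hS2 hr2)
  obtain ⟨u, hu⟩ := Subring.closure_le.mpr
    (fun x hx => RingHom.mem_range.mpr (Set.mem_range.mp hx)) ha2
  obtain ⟨v, hv⟩ := Subring.closure_le.mpr
    (fun x hx => RingHom.mem_range.mpr (Set.mem_range.mp hx)) hb2
  rw [RingHom.comp_apply] at hf hg hu hv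
  -- facts about denominators
  have hbL : algebraMap (MvPolynomial (Fin N) K) (FractionRing (MvPolynomial (Fin N) K)) (θ g) ≠ 0 := by
    intro h0
    exact hr0 (by rw [← hab, ← hf, ← hg, h0, div_zero])
  have hvL : algebraMap (MvPolynomial (Fin N) K) (FractionRing (MvPolynomial (Fin N) K)) (ε v) ≠ 0 := by
    intro h0
    exact hr0 (by rw [← hab2, ← hu, ← hv, h0, div_zero])
  have hQ0 : θ g ≠ 0 := fun h0 => hbL (by rw [h0, map_zero])
  have hV0 : ε v ≠ 0 := fun h0 => hvL (by rw [h0, map_zero])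
  -- cross multiplication
  have cross : θ f * ε v = θ g * ε u := by
    apply hinj
    rw [map_mul, map_mul]
    have heq : algebraMap (MvPolynomial (Fin N) K) (FractionRing (MvPolynomial (Fin N) K)) (θ f) / algebraMap (MvPolynomial (Fin N) K) (FractionRing (MvPolynomial (Fin N) K)) (θ g)
        = algebraMap (MvPolynomial (Fin N) K) (FractionRing (MvPolynomial (Fin N) K)) (ε u) / algebraMap (MvPolynomial (Fin N) K) (FractionRing (MvPolynomial (Fin N) K)) (ε v) := by
      rw [hf, hg, hu, hv, hab, hab2]
    have := (div_eq_div_iff hbL hvL).mp heq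
    rw [this]; ring
  -- pderiv of anything in the image of ε vanishes
  have hpε : ∀ (q : MvPolynomial (Fin N) K) (i : Fin N), pderiv i (ε q) = 0 := by
    intro q i
    induction q using MvPolynomial.induction_on with
    | C c =>
      have : ε (C c) = C c := by
        simp only [hε, AlgHom.toRingHom_eq_coe, RingHom.coe_coe, aeval_C]; rfl
      rw [this, pderiv_C]
    | add f1 g1 hf1 hg1 => rw [map_add, map_add, hf1, hg1, add_zero]
    | mul_X f1 j hf1 =>
      have hXj : ε (X j) = (X j : MvPolynomial (Fin N) K) ^ p := by
        simp only [hε, AlgHom.toRingHom_eq_coe, RingHom.coe_coe, aeval_X]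
      rw [map_mul, hXj, pderiv_mul, hf1, zero_mul, zero_add, pderiv_pow,
        CharP.cast_eq_zero (MvPolynomial (Fin N) K) p, zero_mul, zero_mul, mul_zero]
  -- pderiv of p-th powers vanishes
  have hppow : ∀ (q : MvPolynomial (Fin N) K) (i : Fin N), pderiv i (q ^ p) = 0 := by
    intro q i
    rw [pderiv_pow, CharP.cast_eq_zero (MvPolynomial (Fin N) K) p, zero_mul, zero_mul]
  -- the numerator polynomial
  have hQp : θ g ^ p = θ g ^ (p - 1) * θ g := by
    rw [← pow_succ, Nat.sub_add_cancel hp]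
  have hWV : (θ f * θ g ^ (p - 1)) * ε v = θ g ^ p * ε u := by
    calc (θ f * θ g ^ (p - 1)) * ε v = (θ f * ε v) * θ g ^ (p - 1) := by ring
    _ = (θ g * ε u) * θ g ^ (p - 1) := by rw [cross]
    _ = θ g ^ p * ε u := by rw [hQp]; ring
  have hpW : ∀ i : Fin N, pderiv i (θ f * θ g ^ (p - 1)) = 0 := by
    intro i
    have h1 : pderiv i ((θ f * θ g ^ (p - 1)) * ε v) = pderiv i (θ f * θ g ^ (p - 1)) * ε v := by
      rw [pderiv_mul, hpε v i, mul_zero, add_zero]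
    have h2 : pderiv i (θ g ^ p * ε u) = 0 := by
      rw [pderiv_mul, hpε u i, mul_zero, hppow (θ g) i, zero_mul, add_zero]
    have h3 : pderiv i (θ f * θ g ^ (p - 1)) * ε v = 0 := by
      rw [← h1, hWV, h2]
    exact (mul_eq_zero.mp h3).resolve_right hV0
  -- elements of the image of θ with vanishing pderivs lie in the target subfield
  have main : ∀ m : MvPolynomial (Fin n) F, (∀ i : Fin N, pderiv i (θ m) = 0) →
      algebraMap (MvPolynomial (Fin N) K) (FractionRing (MvPolynomial (Fin N) K)) (θ m) ∈ Subfield.closure (Set.range ιF ∪ {x | ∃ i : Fin N, (i : ℕ) < n ∧ x = z i ^ p}) := by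
    intro m hm
    apply memA
    · intro d hd i
      exact pderiv_eq_zero_dvd i (θ m) (hm i) d hd
    · intro i hi
      have hθm : θ m = MvPolynomial.map (algebraMap F K) (rename (Fin.castLE hnN) m) := rfl
      have h1 : (θ m).vars ⊆ (rename (Fin.castLE hnN) m).vars := by
        rw [hθm]; exact vars_map _ _
      have h2 := vars_rename (Fin.castLE hnN) m
      obtain ⟨j, hj, hji⟩ := Finset.mem_image.mp (h2 (h1 hi))
      rw [← hji]
      exact j.isLt
    · intro d
      rw [hθ]
      simp only [RingHom.comp_apply, AlgHom.toRingHom_eq_coe, RingHom.coe_coe, coeff_map]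
      exact ⟨_, rfl⟩
  -- assemble
  have hWθ : θ f * θ g ^ (p - 1) = θ (f * g ^ (p - 1)) := by
    rw [map_mul, map_pow]
  have hQpθ : θ g ^ p = θ (g ^ p) := (map_pow θ g p).symm
  have memW : algebraMap (MvPolynomial (Fin N) K) (FractionRing (MvPolynomial (Fin N) K)) (θ f * θ g ^ (p - 1)) ∈ Subfield.closure (Set.range ιF ∪ {x | ∃ i : Fin N, (i : ℕ) < n ∧ x = z i ^ p}) := by
    rw [hWθ]
    exact main _ (fun i => by rw [← hWθ]; exact hpW i)
  have memQp : algebraMap (MvPolynomial (Fin N) K) (FractionRing (MvPolynomial (Fin N) K)) (θ g ^ p) ∈ Subfield.closure (Set.range ιF ∪ {x | ∃ i : Fin N, (i : ℕ) < n ∧ x = z i ^ p}) := by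
    rw [hQpθ]
    exact main _ (fun i => by rw [← hQpθ]; exact hppow (θ g) i)
  have hrq : r = algebraMap (MvPolynomial (Fin N) K) (FractionRing (MvPolynomial (Fin N) K)) (θ f * θ g ^ (p - 1)) / algebraMap (MvPolynomial (Fin N) K) (FractionRing (MvPolynomial (Fin N) K)) (θ g ^ p) := by
    have hP : algebraMap (MvPolynomial (Fin N) K) (FractionRing (MvPolynomial (Fin N) K)) (θ f) = r * algebraMap (MvPolynomial (Fin N) K) (FractionRing (MvPolynomial (Fin N) K)) (θ g) := by
      refine (div_eq_iff hbL).mp ?_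
      rw [hf, hg]; exact hab
    have hden : algebraMap (MvPolynomial (Fin N) K) (FractionRing (MvPolynomial (Fin N) K)) (θ g ^ p) ≠ 0 := by
      rw [map_pow]; exact pow_ne_zero _ hbL
    rw [eq_div_iff hden, map_mul, map_pow, hP, map_pow]
    conv_lhs => rw [show p = (p - 1) + 1 from (Nat.sub_add_cancel hp).symm]
    rw [pow_succ]
    ring
  rw [hrq]
  exact Subfield.div_mem _ memW memQp
end
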